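/- arXiv:2201.10958 — 5 statements merged into one kernel-verified Lean document; each statement's English description precedes it below -/
import Mathlib

section
/- Let S_n be the sum of the Sackin index over all binary tree shapes with n leaves. Then S_1 = 0 and for n > 1, S_n = n·b_n + Σ_{1 ≤ k < n} S_k·b_{n−k} + [n even]·S_{n/2}, where b_m is the number of tree shapes with m leaves. -/
/-- Full binary rooted trees with leaves carrying data of type `α`. -/
inductive BTree (α : Type) : Type
  | leaf (a : α) : BTree α
  | node (l r : BTree α) : BTree α

namespace BTree

/-- Number of leaves below (the subtree rooted at) a node. -/
def leaves {α} : BTree α → ℕ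
  | leaf _ => 1
  | node l r => leaves l + leaves r

/-- Sackin index: sum over internal nodes of the number of leaves below that node. -/
def sackin {α} : BTree α → ℕ
  | leaf _ => 0
  | node l r => (leaves l + leaves r) + sackin l + sackin r

/-- Colless index: sum over internal nodes of the absolute difference of leaf counts
of the two children. -/
def colless {α} : BTree α → ℕ
  | leaf _ => 0
  | node l r => ((leaves l : ℤ) - (leaves r : ℤ)).natAbs + colless l + colless r

/-- Sum over all leaves of their depth (number of edges from the root). -/
def depthSum {α} : BTree α → ℕ
  | leaf _ => 0
  | node l r => (depthSum l + leaves l) + (depthSum r + leaves r)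

/-- Sum of leaf counts `ℓ_T(u)` over all nodes `u` (including leaves, each counting 1). -/
def totalL {α} : BTree α → ℕ
  | leaf _ => 1
  | node l r => (leaves l + leaves r) + totalL l + totalL r

/-- Sum over internal nodes of the minimum of the leaf counts of the two children. -/
def minSum {α} : BTree α → ℕ
  | leaf _ => 0
  | node l r => min (leaves l) (leaves r) + minSum l + minSum r

/-- Number of edges strictly below a node (each node of the subtree other than
its root contributes the edge to its parent). -/
def edgesBelow {α} : BTree α → ℕ
  | leaf _ => 0
  | node l r => 2 + edgesBelow l + edgesBelow r

/-- Number of internal (non-leaf) nodes. -/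
def internals {α} : BTree α → ℕ
  | leaf _ => 0
  | node l r => 1 + internals l + internals r

/-- `Subtree s t` means the subtree `s` occurs in `t`; thus `Subtree (node v w) T`
expresses that `T` has an internal node whose two child subtrees are `v` and `w`. -/
inductive Subtree {α} : BTree α → BTree α → Prop
  | refl (t) : Subtree t t
  | left {s l r} : Subtree s l → Subtree s (node l r)
  | right {s l r} : Subtree s r → Subtree s (node l r)

/-- Generating relation of tree-shape isomorphism: swapping the two children of a node. -/
inductive Rel {α} : BTree α → BTree α → Prop
  | swap (l r) : Rel (node l r) (node r l)
  | congrL {l l'} (r) : Rel l l' → Rel (node l r) (node l' r)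
  | congrR (l) {r r'} : Rel r r' → Rel (node l r) (node l r')

/-- The list of leaf labels, left to right. -/
def leafList {α} : BTree α → List α
  | leaf a => [a]
  | node l r => leafList l ++ leafList r

end BTree

/-- Binary tree shapes: full binary rooted trees up to isomorphism (children unordered). -/
def Shape : Type := Quot (@BTree.Rel Unit)

noncomputable def Shape.leaves (q : Shape) : ℕ := BTree.leaves q.out
noncomputable def Shape.sackin (q : Shape) : ℕ := BTree.sackin q.out
noncomputable def Shape.colless (q : Shape) : ℕ := BTree.colless q.out

/-- `bSh n` = number of binary tree shapes with `n` leaves. -/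
noncomputable def bSh (n : ℕ) : ℕ := Set.ncard {q : Shape | q.leaves = n}

/-- `S_n`: total Sackin index over all tree shapes with `n` leaves. -/
noncomputable def Snum (n : ℕ) : ℕ := ∑ᶠ q ∈ {q : Shape | q.leaves = n}, Shape.sackin q

/-- `D_n = (1/2) Σ_{T ∈ 𝒯(n)} (S(T) - C(T))`. -/
noncomputable def Dnum (n : ℕ) : ℕ :=
  (∑ᶠ q ∈ {q : Shape | q.leaves = n}, (Shape.sackin q - Shape.colless q)) / 2

/-- Phylogenetic trees as labelled full binary rooted trees up to isomorphism. -/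
def PTree : Type := Quot (@BTree.Rel ℕ)

/-- A labelled tree is a phylogenetic tree on `n` taxa if its leaf labels are
exactly `{1, ..., n}`, each occurring once. -/
def BTree.isPhylo (n : ℕ) (t : BTree ℕ) : Prop :=
  (BTree.leafList t).Perm ((List.range n).map (· + 1))

/-- The set `𝒫(n)` of phylogenetic trees on `n` taxa. -/
noncomputable def PhyloSet (n : ℕ) : Set PTree := {q | BTree.isPhylo n q.out}

/-- `a_n = |𝒫(n)|`. -/
noncomputable def aP (n : ℕ) : ℕ := Set.ncard (PhyloSet n)

/-- Total Sackin index over all phylogenetic trees on `n` taxa. -/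
noncomputable def SpTotal (n : ℕ) : ℕ := ∑ᶠ q ∈ PhyloSet n, BTree.sackin (Quot.out q)

/-- All trees obtained from `t` by attaching a new leaf labelled `x` on each of the
`2·leaves t - 1` edges of `t` (including the open edge entering the root). -/
def BTree.attach (x : ℕ) : BTree ℕ → List (BTree ℕ)
  | .leaf a => [.node (.leaf a) (.leaf x)]
  | .node l r =>
      .node (.node l r) (.leaf x) ::
        ((BTree.attach x l).map (fun l' => .node l' r) ++
         (BTree.attach x r).map (fun r' => .node l r'))

/-!
A shape with `n > 1` leaves is `node a b` for an unordered pair `{a, b}` of shapes with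
`n` leaves in total, and its Sackin index is `n + S(a) + S(b)`. Summing over ordered pairs
`(a, b)` counts every shape twice, except those with `a = b`, which exist only for even `n`
and correspond to the shapes with `n / 2` leaves; the sum over ordered pairs is a convolution.
Unordered pairs are recognised through canonical representatives, whose children are sorted
by an injective code into `ℕ`.
-/

theorem Finset.sum_add_sum_filter_diag_eq_two_nsmul_sum_image {α β M : Type*} [DecidableEq α]
    [DecidableEq β] [AddCommMonoid M] {s : Finset (α × α)} {φ : α × α → β}
    (hs : ∀ p ∈ s, p.swap ∈ s) (hφ : ∀ p ∈ s, ∀ q ∈ s, φ q = φ p ↔ q = p ∨ q = p.swap)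
    (g : β → M) :
    ∑ p ∈ s, g (φ p) + ∑ p ∈ s with p.1 = p.2, g (φ p) = 2 • ∑ b ∈ s.image φ, g b := by
  rw [Finset.sum_filter, ← Finset.sum_add_distrib, Finset.smul_sum]
  refine (Finset.sum_image' _ fun p hp => ?_).symm
  have hfiber : {q ∈ s | φ q = φ p} = {p, p.swap} := by
    ext q
    simp only [Finset.mem_filter, Finset.mem_insert, Finset.mem_singleton]
    constructor
    · rintro ⟨hq, hqp⟩
      exact (hφ p hp q hq).1 hqp
    · rintro (rfl | rfl)
      · exact ⟨hp, rfl⟩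
      · exact ⟨hs p hp, (hφ p hp _ (hs p hp)).2 (Or.inr rfl)⟩
  rw [hfiber]
  by_cases hdiag : p.1 = p.2
  · have hswap : p.swap = p := Prod.ext hdiag.symm hdiag
    simp [hswap, hdiag, two_nsmul]
  · have hne : p ≠ p.swap := fun h => hdiag (congrArg Prod.fst h)
    have hφswap : φ p.swap = φ p := (hφ p hp _ (hs p hp)).2 (Or.inr rfl)
    rw [Finset.sum_pair hne]
    simp [hdiag, hφswap, Ne.symm hdiag, two_nsmul]

namespace BTree

theorem leaves_pos {α : Type} (t : BTree α) : 0 < t.leaves := by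
  induction t with
  | leaf => simp [leaves]
  | node l r ihl ihr => simp only [leaves]; omega

theorem leaves_eq_of_rel {α : Type} {t s : BTree α} (h : Rel t s) : t.leaves = s.leaves := by
  induction h with
  | swap l r => simp only [leaves]; omega
  | congrL r _ ih => simp only [leaves, ih]
  | congrR l _ ih => simp only [leaves, ih]

theorem sackin_eq_of_rel {α : Type} {t s : BTree α} (h : Rel t s) : t.sackin = s.sackin := by
  induction h with
  | swap l r => simp only [sackin]; omega
  | congrL r h ih => simp only [sackin, leaves_eq_of_rel h, ih]
  | congrR l h ih => simp only [sackin, leaves_eq_of_rel h, ih]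

def code : BTree Unit → ℕ
  | leaf _ => 0
  | node l r => Nat.pair (code l) (code r) + 1

theorem code_injective : Function.Injective code := by
  intro t s h
  induction t generalizing s with
  | leaf => cases s <;> simp_all [code]
  | node l r ihl ihr =>
    cases s with
    | leaf => simp [code] at h
    | node l' r' =>
      simp only [code, Nat.add_right_cancel_iff, Nat.pair_eq_pair] at h
      rw [ihl h.1, ihr h.2]

def orderedNode (x y : BTree Unit) : BTree Unit :=
  if code x ≤ code y then node x y else node y x

theorem orderedNode_comm (x y : BTree Unit) : orderedNode x y = orderedNode y x := by
  unfold orderedNode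
  split_ifs with hxy hyx hyx
  · rw [code_injective (le_antisymm hxy hyx)]
  · rfl
  · rfl
  · omega

theorem eq_and_eq_or_of_orderedNode_eq {x y z w : BTree Unit}
    (h : orderedNode x y = orderedNode z w) : (x = z ∧ y = w) ∨ (x = w ∧ y = z) := by
  unfold orderedNode at h
  split_ifs at h <;> simp only [node.injEq] at h <;> tauto

def canon : BTree Unit → BTree Unit
  | leaf a => leaf a
  | node l r => orderedNode (canon l) (canon r)

theorem canon_eq_of_rel {t s : BTree Unit} (h : Rel t s) : canon t = canon s := by
  induction h with
  | swap l r => exact orderedNode_comm _ _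
  | congrL r _ ih => simp only [canon, ih]
  | congrR l _ ih => simp only [canon, ih]

end BTree

namespace Shape

open BTree

def mk (t : BTree Unit) : Shape := Quot.mk _ t

@[elab_as_elim]
theorem ind {p : Shape → Prop} (h : ∀ t, p (mk t)) (q : Shape) : p q := Quot.ind h q

def leaf : Shape := mk (.leaf ())

def node : Shape → Shape → Shape :=
  Quot.map₂ BTree.node (fun _ _ _ h => Rel.congrR _ h) (fun _ _ _ h => Rel.congrL _ h)

theorem node_mk (l r : BTree Unit) : node (mk l) (mk r) = mk (.node l r) := rfl

theorem node_comm (a b : Shape) : node a b = node b a := by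
  induction a using ind; induction b using ind
  exact Quot.sound (.swap _ _)

theorem eq_leaf_or_exists_eq_node (q : Shape) : q = leaf ∨ ∃ a b, q = node a b := by
  induction q using ind with | h t => ?_
  cases t with
  | leaf => exact .inl rfl
  | node l r => exact .inr ⟨mk l, mk r, rfl⟩

theorem apply_out_mk {β : Type*} (f : BTree Unit → β) (hf : ∀ t s, BTree.Rel t s → f t = f s)
    (t : BTree Unit) : f (Quot.out (mk t)) = f t :=
  congrArg (Quot.lift f hf) (Quot.out_eq (mk t))

theorem leaves_mk (t : BTree Unit) : (mk t).leaves = t.leaves :=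
  apply_out_mk _ (fun _ _ => leaves_eq_of_rel) t

theorem sackin_mk (t : BTree Unit) : (mk t).sackin = t.sackin :=
  apply_out_mk _ (fun _ _ => sackin_eq_of_rel) t

theorem leaves_pos (q : Shape) : 0 < q.leaves := by
  induction q using ind
  rw [leaves_mk]
  exact BTree.leaves_pos _

theorem leaves_leaf : leaf.leaves = 1 := leaves_mk _

theorem sackin_leaf : leaf.sackin = 0 := sackin_mk _

theorem leaves_node (a b : Shape) : (node a b).leaves = a.leaves + b.leaves := by
  induction a using ind; induction b using ind
  simp only [node_mk, leaves_mk, BTree.leaves]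

theorem sackin_node (a b : Shape) :
    (node a b).sackin = a.leaves + b.leaves + a.sackin + b.sackin := by
  induction a using ind; induction b using ind
  simp only [node_mk, sackin_mk, leaves_mk, BTree.sackin]

theorem sackin_eq_zero_of_leaves_eq_one {q : Shape} (h : q.leaves = 1) : q.sackin = 0 := by
  rcases eq_leaf_or_exists_eq_node q with rfl | ⟨a, b, rfl⟩
  · exact sackin_leaf
  · have := a.leaves_pos; have := b.leaves_pos
    rw [leaves_node] at h
    omega

theorem mk_orderedNode (x y : BTree Unit) : mk (orderedNode x y) = node (mk x) (mk y) := by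
  unfold orderedNode
  split_ifs
  · rfl
  · exact node_comm (mk y) (mk x)

def canon : Shape → BTree Unit := Quot.lift BTree.canon fun _ _ => canon_eq_of_rel

theorem mk_canon (q : Shape) : mk q.canon = q := by
  induction q using ind with | h t => ?_
  change mk t.canon = mk t
  induction t with
  | leaf => rfl
  | node l r ihl ihr => rw [BTree.canon, mk_orderedNode, ihl, ihr, node_mk]

theorem canon_node (a b : Shape) : (node a b).canon = orderedNode a.canon b.canon := by
  induction a using ind; induction b using ind
  rfl

theorem node_eq_node_iff {a b c d : Shape} :
    node a b = node c d ↔ (a = c ∧ b = d) ∨ (a = d ∧ b = c) := by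
  constructor
  · intro h
    have h' := congrArg canon h
    rw [canon_node, canon_node] at h'
    rw [← mk_canon a, ← mk_canon b, ← mk_canon c, ← mk_canon d]
    rcases eq_and_eq_or_of_orderedNode_eq h' with ⟨hac, hbd⟩ | ⟨had, hbc⟩
    · exact .inl ⟨congrArg mk hac, congrArg mk hbd⟩
    · exact .inr ⟨congrArg mk had, congrArg mk hbc⟩
  · rintro (⟨rfl, rfl⟩ | ⟨rfl, rfl⟩)
    · rfl
    · exact node_comm _ _

theorem finite_setOf_leaves_eq (n : ℕ) : {q : Shape | q.leaves = n}.Finite := by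
  induction n using Nat.strong_induction_on with
  | _ n ih =>
    have hlt : ∀ k ∈ Finset.Ico 1 n, k < n ∧ n - k < n := fun k hk => by
      have := Finset.mem_Ico.mp hk; omega
    refine ((Set.finite_singleton leaf).union ((Finset.Ico 1 n).finite_toSet.biUnion
      fun k hk => (ih k (hlt k hk).1).image2 node (ih (n - k) (hlt k hk).2))).subset ?_
    intro q hq
    rcases eq_leaf_or_exists_eq_node q with rfl | ⟨a, b, rfl⟩
    · exact .inl rfl
    · have := a.leaves_pos; have := b.leaves_pos
      simp only [Set.mem_ofPred_eq, leaves_node] at hq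
      refine .inr (Set.mem_biUnion (x := a.leaves) ?_ ⟨a, rfl, b, ?_, rfl⟩)
      · simp only [Finset.coe_Ico, Set.mem_Ico]; omega
      · simp only [Set.mem_ofPred_eq]; omega

noncomputable def ofLeaves (n : ℕ) : Finset Shape := (finite_setOf_leaves_eq n).toFinset

theorem mem_ofLeaves {n : ℕ} {q : Shape} : q ∈ ofLeaves n ↔ q.leaves = n :=
  Set.Finite.mem_toFinset _

theorem _root_.Snum_eq_sum_ofLeaves (n : ℕ) : Snum n = ∑ q ∈ ofLeaves n, q.sackin :=
  finsum_mem_eq_finite_toFinset_sum _ _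

theorem _root_.bSh_eq_card_ofLeaves (n : ℕ) : bSh n = (ofLeaves n).card :=
  Set.ncard_eq_toFinset_card _ _

section

open Classical

noncomputable def pairsOfLeaves (n : ℕ) : Finset (Shape × Shape) :=
  (Finset.Ico 1 n).biUnion fun k => ofLeaves k ×ˢ ofLeaves (n - k)

theorem mem_pairsOfLeaves {n : ℕ} {p : Shape × Shape} :
    p ∈ pairsOfLeaves n ↔ p.1.leaves + p.2.leaves = n := by
  have := p.1.leaves_pos; have := p.2.leaves_pos
  simp only [pairsOfLeaves, Finset.mem_biUnion, Finset.mem_Ico, Finset.mem_product, mem_ofLeaves]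
  constructor
  · rintro ⟨k, -, rfl, h⟩; omega
  · intro h; exact ⟨p.1.leaves, by omega, rfl, by omega⟩

theorem swap_mem_pairsOfLeaves {n : ℕ} {p : Shape × Shape} (hp : p ∈ pairsOfLeaves n) :
    p.swap ∈ pairsOfLeaves n := by
  rw [mem_pairsOfLeaves] at hp ⊢
  simp only [Prod.fst_swap, Prod.snd_swap]
  omega

theorem ofLeaves_eq_image_node {n : ℕ} (hn : 1 < n) :
    ofLeaves n = (pairsOfLeaves n).image fun p => node p.1 p.2 := by
  ext q
  simp only [mem_ofLeaves, Finset.mem_image, mem_pairsOfLeaves, Prod.exists]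
  constructor
  · rintro rfl
    rcases eq_leaf_or_exists_eq_node q with rfl | ⟨a, b, rfl⟩
    · rw [leaves_leaf] at hn; omega
    · exact ⟨a, b, (leaves_node a b).symm, rfl⟩
  · rintro ⟨a, b, hab, rfl⟩
    rw [leaves_node, hab]

theorem sum_pairsOfLeaves_add_sum_diag {M : Type*} [AddCommMonoid M] {n : ℕ} (hn : 1 < n)
    (g : Shape → M) :
    ∑ p ∈ pairsOfLeaves n, g (node p.1 p.2) +
      ∑ p ∈ pairsOfLeaves n with p.1 = p.2, g (node p.1 p.2) = 2 • ∑ q ∈ ofLeaves n, g q := by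
  rw [ofLeaves_eq_image_node hn]
  refine Finset.sum_add_sum_filter_diag_eq_two_nsmul_sum_image
    (fun p => swap_mem_pairsOfLeaves) (fun p _ q _ => ?_) g
  rw [node_eq_node_iff, Prod.ext_iff, Prod.ext_iff]
  rfl

theorem sum_pairsOfLeaves_snd {M : Type*} [AddCommMonoid M] (n : ℕ) (f : Shape → M) :
    ∑ p ∈ pairsOfLeaves n, f p.2 = ∑ p ∈ pairsOfLeaves n, f p.1 :=
  Finset.sum_nbij' Prod.swap Prod.swap (fun _ => swap_mem_pairsOfLeaves)
    (fun _ => swap_mem_pairsOfLeaves) (fun _ _ => rfl) (fun _ _ => rfl) (fun _ _ => rfl)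

theorem sum_pairsOfLeaves_sackin_fst (n : ℕ) :
    ∑ p ∈ pairsOfLeaves n, p.1.sackin = ∑ k ∈ Finset.Ico 1 n, Snum k * bSh (n - k) := by
  rw [pairsOfLeaves, Finset.sum_biUnion]
  · refine Finset.sum_congr rfl fun k _ => ?_
    rw [Snum_eq_sum_ofLeaves, bSh_eq_card_ofLeaves, Finset.sum_mul, Finset.sum_product]
    simp only [Finset.sum_const, smul_eq_mul, mul_comm]
  · intro i _ j _ hij
    refine Finset.disjoint_left.mpr fun p hpi hpj => hij ?_
    simp only [Finset.mem_product, mem_ofLeaves] at hpi hpj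
    rw [← hpi.1, hpj.1]

theorem sum_pairsOfLeaves_diag {M : Type*} [AddCommMonoid M] (n : ℕ) (f : Shape → M) :
    ∑ p ∈ pairsOfLeaves n with p.1 = p.2, f p.1 =
      if Even n then ∑ q ∈ ofLeaves (n / 2), f q else 0 := by
  have hdiag : ∀ p ∈ pairsOfLeaves n, p.1 = p.2 → 2 * p.1.leaves = n := by
    intro p hp hdiag
    rw [mem_pairsOfLeaves, ← hdiag] at hp
    omega
  split_ifs with he
  · refine Finset.sum_nbij' Prod.fst (fun q => (q, q)) ?_ ?_ ?_ (fun _ _ => rfl) (fun _ _ => rfl)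
    · intro p hp
      rw [Finset.mem_filter] at hp
      have := hdiag p hp.1 hp.2
      rw [mem_ofLeaves]
      omega
    · intro q hq
      rw [mem_ofLeaves] at hq
      obtain ⟨m, rfl⟩ := he
      simp only [Finset.mem_filter, mem_pairsOfLeaves, and_true]
      omega
    · intro p hp
      rw [Finset.mem_filter] at hp
      exact Prod.ext rfl hp.2
  · refine Finset.sum_eq_zero fun p hp => absurd ?_ he
    rw [Finset.mem_filter] at hp
    exact ⟨p.1.leaves, by have := hdiag p hp.1 hp.2; omega⟩

theorem sum_pairsOfLeaves_sackin_node (n : ℕ) :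
    ∑ p ∈ pairsOfLeaves n, (node p.1 p.2).sackin =
      ∑ _p ∈ pairsOfLeaves n, n + 2 * ∑ k ∈ Finset.Ico 1 n, Snum k * bSh (n - k) :=
  calc ∑ p ∈ pairsOfLeaves n, (node p.1 p.2).sackin
      = ∑ p ∈ pairsOfLeaves n, (n + p.1.sackin + p.2.sackin) :=
        Finset.sum_congr rfl fun p hp => by rw [sackin_node, mem_pairsOfLeaves.mp hp]
    _ = ∑ _p ∈ pairsOfLeaves n, n + (∑ p ∈ pairsOfLeaves n, p.1.sackin +
          ∑ p ∈ pairsOfLeaves n, p.2.sackin) := by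
        rw [Finset.sum_add_distrib, Finset.sum_add_distrib, add_assoc]
    _ = _ := by rw [sum_pairsOfLeaves_snd, sum_pairsOfLeaves_sackin_fst, two_mul]

theorem sum_pairsOfLeaves_diag_sackin_node (n : ℕ) :
    ∑ p ∈ pairsOfLeaves n with p.1 = p.2, (node p.1 p.2).sackin =
      ∑ p ∈ pairsOfLeaves n with p.1 = p.2, n +
        2 * if Even n then Snum (n / 2) else 0 :=
  calc ∑ p ∈ pairsOfLeaves n with p.1 = p.2, (node p.1 p.2).sackin
      = ∑ p ∈ pairsOfLeaves n with p.1 = p.2, (n + 2 * p.1.sackin) :=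
        Finset.sum_congr rfl fun p hp => by
          obtain ⟨hp, hdiag⟩ := Finset.mem_filter.mp hp
          rw [sackin_node, mem_pairsOfLeaves.mp hp, ← hdiag, two_mul, add_assoc]
    _ = _ := by
        rw [Finset.sum_add_distrib, ← Finset.mul_sum, sum_pairsOfLeaves_diag,
          Snum_eq_sum_ofLeaves]

end

end Shape

/-- the recurrence for the total Sackin index over tree shapes. -/
theorem stmt_8 : Snum 1 = 0 ∧ ∀ n : ℕ, 1 < n →
    Snum n = n * bSh n + (∑ k ∈ Finset.Ico 1 n, Snum k * bSh (n - k)) +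
      (if Even n then Snum (n / 2) else 0) := by
  refine ⟨?_, fun n hn => ?_⟩
  · rw [Snum_eq_sum_ofLeaves]
    exact Finset.sum_eq_zero fun q hq =>
      Shape.sackin_eq_zero_of_leaves_eq_one (Shape.mem_ofLeaves.mp hq)
  have hsackin := Shape.sum_pairsOfLeaves_add_sum_diag hn Shape.sackin
  have hcount := Shape.sum_pairsOfLeaves_add_sum_diag hn fun _ => n
  rw [Shape.sum_pairsOfLeaves_sackin_node, Shape.sum_pairsOfLeaves_diag_sackin_node,
    ← Snum_eq_sum_ofLeaves] at hsackin
  simp only [Finset.sum_const, smul_eq_mul, ← bSh_eq_card_ofLeaves] at hsackin hcount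
  split_ifs at hsackin ⊢ <;> linarith
end

section
/- Let P be a phylogenetic tree on n taxa and 𝒜(P) the set of 2n−1 phylogenetic trees on n+1 taxa obtained by attaching leaf n+1 to each of the 2n−1 edges of P (including the open edge above the root). Then Σ_{Q ∈ 𝒜(P)} S(Q) = 2(n+1)·S(P) + (n+1), where S is the Sackin index. -/
lemma my_one_le_leaves {α} (t : BTree α) : 1 ≤ t.leaves := by
  induction t with
  | leaf a => simp [BTree.leaves]
  | node l r ihl ihr => simp [BTree.leaves]; omega

lemma my_attach_length (x : ℕ) (t : BTree ℕ) :
    (BTree.attach x t).length + 1 = 2 * t.leaves := by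
  induction t with
  | leaf a => simp [BTree.attach, BTree.leaves]
  | node l r ihl ihr =>
    simp [BTree.attach, BTree.leaves] at *
    omega

lemma my_leaves_mem_attach (x : ℕ) (t t' : BTree ℕ) (h : t' ∈ BTree.attach x t) :
    t'.leaves = t.leaves + 1 := by
  induction t generalizing t' with
  | leaf a =>
    simp [BTree.attach] at h
    subst h; simp [BTree.leaves]
  | node l r ihl ihr =>
    simp [BTree.attach] at h
    rcases h with h | ⟨s, hs, rfl⟩ | ⟨s, hs, rfl⟩
    · subst h; simp [BTree.leaves]
    · have := ihl s hs; simp [BTree.leaves] at *; omega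
    · have := ihr s hs; simp [BTree.leaves] at *; omega

lemma my_const_sum (A : List (BTree ℕ)) (c : ℕ) (h : ∀ t ∈ A, t.leaves = c) :
    (A.map BTree.leaves).sum = A.length * c := by
  induction A with
  | nil => simp
  | cons a A ih =>
    simp only [List.map_cons, List.sum_cons, List.length_cons]
    rw [h a (by simp), ih (fun t ht => h t (by simp [ht]))]
    ring

lemma my_split_sum (A : List (BTree ℕ)) (c : ℕ) :
    (A.map (fun t => t.leaves + c + t.sackin)).sum
      = (A.map BTree.leaves).sum + (A.map BTree.sackin).sum + A.length * c := by
  induction A with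
  | nil => simp
  | cons a A ih =>
    simp only [List.map_cons, List.sum_cons, List.length_cons, ih]
    ring

lemma my_attach_sum (x : ℕ) (t : BTree ℕ) :
    ((BTree.attach x t).map BTree.sackin).sum
      = 2 * (t.leaves + 1) * t.sackin + (t.leaves + 1) := by
  induction t with
  | leaf a => simp [BTree.attach, BTree.sackin, BTree.leaves]
  | node l r ihl ihr =>
    have ha := my_one_le_leaves l
    have hb := my_one_le_leaves r
    have hla := my_attach_length x l
    have hlb := my_attach_length x r
    obtain ⟨a', ha'⟩ : ∃ a', l.leaves = a' + 1 := ⟨l.leaves - 1, by omega⟩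
    obtain ⟨b', hb'⟩ : ∃ b', r.leaves = b' + 1 := ⟨r.leaves - 1, by omega⟩
    have hl1 : ((BTree.attach x l).map (fun l' => BTree.node l' r)).map BTree.sackin
        = (BTree.attach x l).map (fun l' => l'.leaves + (r.leaves + l'.sackin + r.sackin)) := by
      simp only [List.map_map]
      apply List.map_congr_left
      intro s hs
      simp [Function.comp, BTree.sackin]; ring
    have hr1 : ((BTree.attach x r).map (fun r' => BTree.node l r')).map BTree.sackin
        = (BTree.attach x r).map (fun r' => r'.leaves + (l.leaves + l.sackin + r'.sackin)) := by
      simp only [List.map_map]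
      apply List.map_congr_left
      intro s hs
      simp [Function.comp, BTree.sackin]; ring
    have hl2 : ((BTree.attach x l).map (fun l' => l'.leaves + (r.leaves + l'.sackin + r.sackin))).sum
        = ((BTree.attach x l).map BTree.leaves).sum + ((BTree.attach x l).map BTree.sackin).sum
          + (BTree.attach x l).length * (r.leaves + r.sackin) := by
      have := my_split_sum (BTree.attach x l) (r.leaves + r.sackin)
      rw [← this]
      congr 1; apply List.map_congr_left; intro s _; ring
    have hr2 : ((BTree.attach x r).map (fun r' => r'.leaves + (l.leaves + l.sackin + r'.sackin))).sum
        = ((BTree.attach x r).map BTree.leaves).sum + ((BTree.attach x r).map BTree.sackin).sum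
          + (BTree.attach x r).length * (l.leaves + l.sackin) := by
      have := my_split_sum (BTree.attach x r) (l.leaves + l.sackin)
      rw [← this]
      congr 1; apply List.map_congr_left; intro s _; ring
    have hcl : ((BTree.attach x l).map BTree.leaves).sum
        = (BTree.attach x l).length * (l.leaves + 1) :=
      my_const_sum _ _ (fun s hs => my_leaves_mem_attach x l s hs)
    have hcr : ((BTree.attach x r).map BTree.leaves).sum
        = (BTree.attach x r).length * (r.leaves + 1) :=
      my_const_sum _ _ (fun s hs => my_leaves_mem_attach x r s hs)
    have hLa : (BTree.attach x l).length = 2 * a' + 1 := by omega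
    have hLb : (BTree.attach x r).length = 2 * b' + 1 := by omega
    simp only [BTree.attach, List.map_cons, List.sum_cons, List.map_append, List.sum_append]
    rw [hl1, hr1, hl2, hr2, hcl, hcr, hLa, hLb, ha', hb', ihl, ihr]
    simp only [BTree.sackin, BTree.leaves, ha', hb']
    ring

lemma my_leaves_eq_length {α} (t : BTree α) : t.leaves = t.leafList.length := by
  induction t with
  | leaf a => simp [BTree.leaves, BTree.leafList]
  | node l r ihl ihr => simp [BTree.leaves, BTree.leafList]; omega

/-- `Σ_{Q ∈ 𝒜(P)} S(Q) = 2(n+1) S(P) + (n+1)` for every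
phylogenetic tree `P` on `n` taxa. -/
theorem stmt_13 : ∀ (n : ℕ) (P : BTree ℕ), 1 ≤ n → BTree.isPhylo n P →
    ((BTree.attach (n + 1) P).map BTree.sackin).sum =
      2 * (n + 1) * BTree.sackin P + (n + 1) := by
  intro n P _ hP
  have hn : P.leaves = n := by
    rw [my_leaves_eq_length, hP.length_eq]
    simp
  rw [my_attach_sum, hn]
end

section
/- For every n ≥ 2, the expected Sackin index of a phylogenetic tree on n taxa under the uniform model equals 4^{n−1}·n!·(n−1)!/(2n−2)! − n. -/
/-!
Count trees with ordered children instead. Since the taxa are distinct, the `2 ^ (n - 1)` ways of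
swapping children at the `n - 1` internal nodes give distinct ordered trees, all with the same
Sackin index, so the average is the same over ordered trees. Every ordered tree on `n + 1` taxa
arises exactly once by hanging leaf `n + 1`, on either side, above one of the `2n - 1` nodes of
an ordered tree on `n` taxa. Hanging it above a node `v` raises the Sackin index by
`ℓ(v) + 1 + depth(v)`, so the `4n - 2` insertions into a tree `T` have total Sackin index
`(4n + 4) S(T) + 2n + 2`. The count and the total therefore satisfy first-order recurrences,
and the closed form is checked to satisfy the recurrence of their ratio.
-/

deriving instance DecidableEq for BTree

namespace BTree

variable {α : Type}

lemma one_le_leaves (t : BTree α) : 1 ≤ t.leaves := by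
  induction t with
  | leaf => rfl
  | node l r ihl ihr => simp only [leaves]; omega

lemma length_leafList (t : BTree α) : t.leafList.length = t.leaves := by
  induction t with
  | leaf => rfl
  | node l r ihl ihr => simp [leafList, leaves, ihl, ihr]

lemma internals_add_one (t : BTree α) : t.internals + 1 = t.leaves := by
  induction t with
  | leaf => rfl
  | node l r ihl ihr => simp only [internals, leaves]; omega

lemma leafList_ne_nil (t : BTree α) : t.leafList ≠ [] := by
  rw [← List.length_pos_iff, length_leafList]
  exact one_le_leaves t

lemma leaves_eq_of_perm {s t : BTree α} (h : s.leafList.Perm t.leafList) :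
    s.leaves = t.leaves := by
  rw [← length_leafList, ← length_leafList, h.length_eq]

def insertions (x : α) : BTree α → List (BTree α)
  | leaf a => [node (leaf a) (leaf x), node (leaf x) (leaf a)]
  | node l r =>
      node (node l r) (leaf x) :: node (leaf x) (node l r) ::
        ((insertions x l).map (node · r) ++ (insertions x r).map (node l ·))

section insertions

variable {x : α} {s t : BTree α}

lemma mem_insertions_node {l r : BTree α} :
    s ∈ insertions x (node l r) ↔ s = node (node l r) (leaf x) ∨ s = node (leaf x) (node l r) ∨
      (∃ l' ∈ insertions x l, s = node l' r) ∨ ∃ r' ∈ insertions x r, s = node l r' := by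
  simp only [insertions, List.mem_cons, List.mem_append, List.mem_map]
  grind

lemma ne_leaf_of_mem_insertions (h : s ∈ insertions x t) (y : α) : s ≠ leaf y := by
  cases t <;> simp only [insertions, List.mem_cons, List.mem_append, List.mem_map] at h <;>
    grind

lemma leafList_perm_of_mem_insertions (h : s ∈ insertions x t) :
    s.leafList.Perm (x :: t.leafList) := by
  induction t generalizing s with
  | leaf a =>
    simp only [insertions, List.mem_cons, List.not_mem_nil, or_false] at h
    rcases h with rfl | rfl
    · exact List.Perm.swap _ _ _
    · rfl
  | node l r ihl ihr =>
    rcases mem_insertions_node.1 h with rfl | rfl | ⟨l', hl', rfl⟩ | ⟨r', hr', rfl⟩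
    · exact List.perm_append_singleton _ _
    · rfl
    · exact (ihl hl').append_right _
    · exact ((ihr hr').append_left _).trans List.perm_middle

lemma leaves_of_mem_insertions (h : s ∈ insertions x t) : s.leaves = t.leaves + 1 := by
  simpa [length_leafList] using (leafList_perm_of_mem_insertions h).length_eq

lemma length_insertions (x : α) (t : BTree α) : (insertions x t).length + 2 = 4 * t.leaves := by
  induction t with
  | leaf => rfl
  | node l r ihl ihr =>
    simp only [insertions, List.length_cons, List.length_append, List.length_map, leaves]
    omega

lemma nodup_insertions (hx : x ∉ t.leafList) : (insertions x t).Nodup := by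
  induction t with
  | leaf a =>
    have : a ≠ x := by simpa [leafList, eq_comm] using hx
    simp [insertions, this]
  | node l r ihl ihr =>
    simp only [leafList, List.mem_append, not_or] at hx
    have hl : l ≠ leaf x := by rintro rfl; simp [leafList] at hx
    have hr : r ≠ leaf x := by rintro rfl; simp [leafList] at hx
    have hlr : l ≠ node l r := fun h => by
      have := congrArg leaves h; simp only [leaves] at this; have := one_le_leaves r; omega
    simp only [insertions, List.nodup_cons, List.nodup_append, List.mem_cons, List.mem_append,
      List.mem_map, not_or]
    refine ⟨⟨by simp, ?_, ?_⟩, ⟨?_, ?_⟩, ?_, ?_, ?_⟩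
    · rintro ⟨l', -, h⟩; exact hr (node.inj h).2
    · rintro ⟨r', -, h⟩; exact hlr (node.inj h).1
    · rintro ⟨l', hl', h⟩; exact ne_leaf_of_mem_insertions hl' x (node.inj h).1
    · rintro ⟨r', -, h⟩; exact hl (node.inj h).1
    · exact (ihl hx.1).map fun _ _ h => (node.inj h).1
    · exact (ihr hx.2).map fun _ _ h => (node.inj h).2
    · rintro _ ⟨l', hl', rfl⟩ _ ⟨r', -, rfl⟩ h
      have hxl' := (leafList_perm_of_mem_insertions hl').mem_iff.2 List.mem_cons_self
      exact hx.1 ((node.inj h).1 ▸ hxl')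

lemma sum_leaves_insertions (x : α) (t : BTree α) :
    ((insertions x t).map leaves).sum = (insertions x t).length * (t.leaves + 1) := by
  rw [List.map_congr_left fun _ h => leaves_of_mem_insertions h]
  simp

lemma sum_sackin_insertions (x : α) (t : BTree α) :
    ((insertions x t).map sackin).sum = (4 * t.leaves + 4) * t.sackin + 2 * t.leaves + 2 := by
  induction t with
  | leaf => rfl
  | node l r ihl ihr =>
    have hl := length_insertions x l
    have hr := length_insertions x r
    simp only [insertions, List.map_cons, List.sum_cons, List.map_append, List.sum_append,
      List.map_map, Function.comp_def, sackin, leaves, List.sum_map_add, List.map_const',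
      List.sum_replicate, smul_eq_mul]
    rw [sum_leaves_insertions, sum_leaves_insertions, ihl, ihr]
    nlinarith

end insertions

section eraseLeaf

variable [DecidableEq α]

def eraseLeaf (x : α) : BTree α → BTree α
  | leaf a => leaf a
  | node l r =>
      if l = leaf x then r else if r = leaf x then l else node (eraseLeaf x l) (eraseLeaf x r)

variable {x : α} {s t : BTree α}

lemma eraseLeaf_of_not_mem (hx : x ∉ t.leafList) : eraseLeaf x t = t := by
  induction t with
  | leaf => rfl
  | node l r ihl ihr =>
    simp only [leafList, List.mem_append, not_or] at hx
    have hl : l ≠ leaf x := by rintro rfl; simp [leafList] at hx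
    have hr : r ≠ leaf x := by rintro rfl; simp [leafList] at hx
    simp [eraseLeaf, hl, hr, ihl hx.1, ihr hx.2]

lemma eraseLeaf_of_mem_insertions (hx : x ∉ t.leafList) (h : s ∈ insertions x t) :
    eraseLeaf x s = t := by
  induction t generalizing s with
  | leaf a =>
    have : a ≠ x := by simpa [leafList, eq_comm] using hx
    simp only [insertions, List.mem_cons, List.not_mem_nil, or_false] at h
    rcases h with rfl | rfl <;> simp [eraseLeaf, this]
  | node l r ihl ihr =>
    simp only [leafList, List.mem_append, not_or] at hx
    have hr : r ≠ leaf x := by rintro rfl; simp [leafList] at hx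
    rcases mem_insertions_node.1 h with rfl | rfl | ⟨l', hl', rfl⟩ | ⟨r', hr', rfl⟩
    · simp [eraseLeaf]
    · simp [eraseLeaf]
    · simp [eraseLeaf, ne_leaf_of_mem_insertions hl', hr, ihl hx.1 hl', eraseLeaf_of_not_mem hx.2]
    · have hl : l ≠ leaf x := by rintro rfl; simp [leafList] at hx
      simp [eraseLeaf, hl, ne_leaf_of_mem_insertions hr', ihr hx.2 hr', eraseLeaf_of_not_mem hx.1]

lemma mem_insertions_eraseLeaf (hx : x ∈ t.leafList) (ht : t ≠ leaf x) (hnd : t.leafList.Nodup) :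
    t ∈ insertions x (eraseLeaf x t) := by
  induction t with
  | leaf a => simp_all [leafList]
  | node l r ihl ihr =>
    simp only [leafList, List.nodup_append] at hx hnd
    obtain ⟨hndl, hndr, hdisj⟩ := hnd
    by_cases hl : l = leaf x
    · subst hl
      cases r <;> simp [eraseLeaf, insertions]
    by_cases hr : r = leaf x
    · subst hr
      cases l <;> simp [eraseLeaf, insertions, hl]
    simp only [eraseLeaf, if_neg hl, if_neg hr]
    rcases List.mem_append.1 hx with hxl | hxr
    · rw [eraseLeaf_of_not_mem fun hxr => hdisj x hxl x hxr rfl]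
      exact mem_insertions_node.2 (.inr (.inr (.inl ⟨l, ihl hxl hl hndl, rfl⟩)))
    · rw [eraseLeaf_of_not_mem fun hxl => hdisj x hxl x hxr rfl]
      exact mem_insertions_node.2 (.inr (.inr (.inr ⟨r, ihr hxr hr hndr, rfl⟩)))

lemma leafList_eraseLeaf_perm (hx : x ∈ t.leafList) (ht : t ≠ leaf x) (hnd : t.leafList.Nodup) :
    (eraseLeaf x t).leafList.Perm (t.leafList.erase x) := by
  have h := (leafList_perm_of_mem_insertions (mem_insertions_eraseLeaf hx ht hnd)).erase x
  rw [List.erase_cons_head] at h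
  exact h.symm

end eraseLeaf

def flips : BTree α → List (BTree α)
  | leaf a => [leaf a]
  | node l r =>
      (flips l ×ˢ flips r).map (fun p => node p.1 p.2) ++
        (flips l ×ˢ flips r).map (fun p => node p.2 p.1)

section flips

variable {s t u : BTree α}

lemma mem_flips_node {l r : BTree α} :
    s ∈ flips (node l r) ↔ ∃ l' ∈ flips l, ∃ r' ∈ flips r, s = node l' r' ∨ s = node r' l' := by
  simp only [flips, List.mem_append, List.mem_map, List.mem_product, Prod.exists]
  grind

lemma self_mem_flips (t : BTree α) : t ∈ flips t := by
  induction t with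
  | leaf => exact List.mem_singleton_self _
  | node l r ihl ihr => exact mem_flips_node.2 ⟨l, ihl, r, ihr, .inl rfl⟩

lemma mem_flips_symm (h : s ∈ flips t) : t ∈ flips s := by
  induction t generalizing s with
  | leaf => rw [List.mem_singleton.1 h]; exact self_mem_flips _
  | node l r ihl ihr =>
    obtain ⟨l', hl', r', hr', rfl | rfl⟩ := mem_flips_node.1 h
    · exact mem_flips_node.2 ⟨l, ihl hl', r, ihr hr', .inl rfl⟩
    · exact mem_flips_node.2 ⟨r, ihr hr', l, ihl hl', .inr rfl⟩

lemma mem_flips_trans (hs : s ∈ flips t) (hu : u ∈ flips s) : u ∈ flips t := by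
  induction t generalizing s u with
  | leaf => rwa [List.mem_singleton.1 hs] at hu
  | node l r ihl ihr =>
    obtain ⟨l', hl', r', hr', rfl | rfl⟩ := mem_flips_node.1 hs <;>
      obtain ⟨a, ha, b, hb, rfl | rfl⟩ := mem_flips_node.1 hu
    · exact mem_flips_node.2 ⟨a, ihl hl' ha, b, ihr hr' hb, .inl rfl⟩
    · exact mem_flips_node.2 ⟨a, ihl hl' ha, b, ihr hr' hb, .inr rfl⟩
    · exact mem_flips_node.2 ⟨b, ihl hl' hb, a, ihr hr' ha, .inr rfl⟩
    · exact mem_flips_node.2 ⟨b, ihl hl' hb, a, ihr hr' ha, .inl rfl⟩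

lemma mem_flips_of_rel (h : Rel t s) : s ∈ flips t := by
  induction h with
  | swap l r => exact mem_flips_node.2 ⟨l, self_mem_flips l, r, self_mem_flips r, .inr rfl⟩
  | congrL r _ ih => exact mem_flips_node.2 ⟨_, ih, r, self_mem_flips r, .inl rfl⟩
  | congrR l _ ih => exact mem_flips_node.2 ⟨l, self_mem_flips l, _, ih, .inl rfl⟩

lemma mk_node_eq_mk_node {l l' r r' : BTree α} (hl : Quot.mk Rel l = Quot.mk Rel l')
    (hr : Quot.mk Rel r = Quot.mk Rel r') :
    Quot.mk Rel (node l r) = Quot.mk Rel (node l' r') := by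
  let nodeLeft : Quot (@Rel α) → Quot (@Rel α) :=
    Quot.lift (fun a => Quot.mk Rel (node a r)) fun _ _ h => Quot.sound (Rel.congrL r h)
  let nodeRight : Quot (@Rel α) → Quot (@Rel α) :=
    Quot.lift (fun b => Quot.mk Rel (node l' b)) fun _ _ h => Quot.sound (Rel.congrR l' h)
  calc Quot.mk Rel (node l r) = nodeLeft (Quot.mk Rel l) := rfl
    _ = nodeRight (Quot.mk Rel r) := by rw [hl]
    _ = Quot.mk Rel (node l' r') := by rw [hr]

lemma mk_eq_mk_of_mem_flips (h : s ∈ flips t) : Quot.mk Rel t = Quot.mk Rel s := by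
  induction t generalizing s with
  | leaf => rw [List.mem_singleton.1 h]
  | node l r ihl ihr =>
    obtain ⟨l', hl', r', hr', rfl | rfl⟩ := mem_flips_node.1 h
    · exact mk_node_eq_mk_node (ihl hl') (ihr hr')
    · exact (mk_node_eq_mk_node (ihl hl') (ihr hr')).trans (Quot.sound (Rel.swap l' r'))

lemma mk_eq_mk_iff_mem_flips : Quot.mk Rel t = Quot.mk Rel s ↔ s ∈ flips t := by
  refine ⟨fun h => ?_, mk_eq_mk_of_mem_flips⟩
  have hequiv : Equivalence fun t s : BTree α => s ∈ flips t :=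
    ⟨self_mem_flips, mem_flips_symm, mem_flips_trans⟩
  exact hequiv.eqvGen_iff.1 (Relation.EqvGen.mono (fun _ _ => mem_flips_of_rel) _ _ (Quot.eq.1 h))

lemma leafList_perm_of_mem_flips (h : s ∈ flips t) : s.leafList.Perm t.leafList := by
  induction t generalizing s with
  | leaf => rw [List.mem_singleton.1 h]
  | node l r ihl ihr =>
    obtain ⟨l', hl', r', hr', rfl | rfl⟩ := mem_flips_node.1 h
    · exact (ihl hl').append (ihr hr')
    · exact List.perm_append_comm.trans ((ihl hl').append (ihr hr'))

lemma sackin_of_mem_flips (h : s ∈ flips t) : s.sackin = t.sackin := by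
  induction t generalizing s with
  | leaf => rw [List.mem_singleton.1 h]
  | node l r ihl ihr =>
    obtain ⟨l', hl', r', hr', hs⟩ := mem_flips_node.1 h
    have hl := leaves_eq_of_perm (leafList_perm_of_mem_flips hl')
    have hr := leaves_eq_of_perm (leafList_perm_of_mem_flips hr')
    rcases hs with rfl | rfl
    · simp only [sackin, hl, hr, ihl hl', ihr hr']
    · simp only [sackin, hl, hr, ihl hl', ihr hr']
      ring

lemma length_flips (t : BTree α) : (flips t).length = 2 ^ t.internals := by
  induction t with
  | leaf => rfl
  | node l r ihl ihr =>
    simp only [flips, List.length_append, List.length_map, List.length_product, ihl, ihr,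
      internals]
    ring

lemma nodup_flips (h : t.leafList.Nodup) : (flips t).Nodup := by
  induction t with
  | leaf => exact List.nodup_singleton _
  | node l r ihl ihr =>
    simp only [leafList, List.nodup_append] at h
    obtain ⟨hl, hr, hdisj⟩ := h
    have hne {a b} (ha : a ∈ flips l) (hb : b ∈ flips r) : a ≠ b := by
      rintro rfl
      obtain ⟨c, hc⟩ := List.exists_mem_of_ne_nil _ (leafList_ne_nil a)
      exact hdisj c ((leafList_perm_of_mem_flips ha).subset hc) c
        ((leafList_perm_of_mem_flips hb).subset hc) rfl
    have hprod := (ihl hl).product (ihr hr)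
    refine List.nodup_append.2 ⟨hprod.map ?_, hprod.map ?_, ?_⟩
    · rintro ⟨a, b⟩ ⟨a', b'⟩ h; simpa using h
    · rintro ⟨a, b⟩ ⟨a', b'⟩ h; simp only [node.injEq] at h; simp [h]
    · simp only [List.mem_map, List.mem_product, Prod.exists]
      rintro _ ⟨a, b, ⟨ha, -⟩, rfl⟩ _ ⟨a', b', ⟨-, hb'⟩, rfl⟩ h
      exact hne ha hb' (node.inj h).1

end flips

lemma map_add_one_range_succ (n : ℕ) :
    (List.range (n + 1)).map (· + 1) = (List.range n).map (· + 1) ++ [n + 1] := by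
  rw [List.range_succ, List.map_append]
  rfl

variable {n : ℕ} {s t : BTree ℕ}

lemma isPhylo.nodup (h : t.isPhylo n) : t.leafList.Nodup :=
  h.symm.nodup (List.nodup_range.map (add_left_injective 1))

lemma isPhylo.leaves_eq (h : t.isPhylo n) : t.leaves = n := by
  simpa [length_leafList] using h.length_eq

lemma isPhylo.mem_leafList_iff (h : t.isPhylo n) {y : ℕ} : y ∈ t.leafList ↔ 1 ≤ y ∧ y ≤ n := by
  rw [h.mem_iff]
  simp only [List.mem_map, List.mem_range]
  exact ⟨fun ⟨a, ha, hy⟩ => by omega, fun hy => ⟨y - 1, by omega, by omega⟩⟩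

lemma isPhylo_iff_of_mem_flips (h : s ∈ flips t) : s.isPhylo n ↔ t.isPhylo n :=
  (leafList_perm_of_mem_flips h).congr_left _

lemma isPhylo_one_iff : t.isPhylo 1 ↔ t = leaf 1 := by
  refine ⟨fun h => ?_, by rintro rfl; exact List.Perm.refl _⟩
  cases t with
  | leaf a =>
    have := h.mem_leafList_iff.1 (List.mem_singleton_self a)
    rw [show a = 1 by omega]
  | node l r =>
    have := h.leaves_eq; have := one_le_leaves l; have := one_le_leaves r
    simp only [leaves] at *; omega

lemma isPhylo_of_mem_insertions (h : t.isPhylo n) (hs : s ∈ insertions (n + 1) t) :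
    s.isPhylo (n + 1) :=
  ((leafList_perm_of_mem_insertions hs).trans (h.cons _)).trans <| by
    rw [map_add_one_range_succ]; exact (List.perm_append_singleton _ _).symm

lemma isPhylo.eraseLeaf (h : t.isPhylo (n + 1)) (ht : t ≠ leaf (n + 1)) :
    (eraseLeaf (n + 1) t).isPhylo n := by
  have hx : n + 1 ∈ t.leafList := h.mem_leafList_iff.2 ⟨by omega, le_rfl⟩
  refine (leafList_eraseLeaf_perm hx ht h.nodup).trans ((h.erase _).trans ?_)
  rw [map_add_one_range_succ, List.erase_append_right _ (by simp), List.erase_cons_head,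
    List.append_nil]

end BTree

open BTree

def orderedPhylo : ℕ → List (BTree ℕ)
  | 0 => []
  | 1 => [leaf 1]
  | n + 2 => (orderedPhylo (n + 1)).flatMap (insertions (n + 2))

lemma orderedPhylo_succ {n : ℕ} (hn : 1 ≤ n) :
    orderedPhylo (n + 1) = (orderedPhylo n).flatMap (insertions (n + 1)) := by
  obtain ⟨m, rfl⟩ := Nat.exists_eq_add_of_le' hn
  rfl

lemma mem_orderedPhylo {n : ℕ} {t : BTree ℕ} : t ∈ orderedPhylo n ↔ t.isPhylo n := by
  rcases Nat.eq_zero_or_pos n with rfl | hn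
  · simp only [orderedPhylo, List.not_mem_nil, false_iff]
    intro h
    have := h.leaves_eq; have := one_le_leaves t
    omega
  induction n, hn using Nat.le_induction generalizing t with
  | base => simp [orderedPhylo, isPhylo_one_iff]
  | succ n hn ih =>
    rw [orderedPhylo_succ hn, List.mem_flatMap]
    constructor
    · rintro ⟨t₀, ht₀, ht⟩
      exact isPhylo_of_mem_insertions (ih.1 ht₀) ht
    · intro h
      have ht : t ≠ leaf (n + 1) := by
        rintro rfl; have := h.leaves_eq; simp only [leaves] at this; omega
      exact ⟨eraseLeaf (n + 1) t, ih.2 (h.eraseLeaf ht),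
        mem_insertions_eraseLeaf (h.mem_leafList_iff.2 ⟨by omega, le_rfl⟩) ht h.nodup⟩

lemma nodup_orderedPhylo (n : ℕ) : (orderedPhylo n).Nodup := by
  rcases Nat.eq_zero_or_pos n with rfl | hn
  · exact List.nodup_nil
  induction n, hn using Nat.le_induction with
  | base => exact List.nodup_singleton _
  | succ n hn ih =>
    have hfresh {t} (ht : t ∈ orderedPhylo n) : n + 1 ∉ t.leafList := by
      simp [(mem_orderedPhylo.1 ht).mem_leafList_iff]
    rw [orderedPhylo_succ hn, List.nodup_flatMap]
    refine ⟨fun t ht => nodup_insertions (hfresh ht), ih.imp_of_mem ?_⟩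
    intro t t' ht ht' hne s hs hs'
    exact hne ((eraseLeaf_of_mem_insertions (hfresh ht) hs).symm.trans
      (eraseLeaf_of_mem_insertions (hfresh ht') hs'))

def PTree.mk (t : BTree ℕ) : PTree := Quot.mk Rel t

lemma PTree.mk_out (q : PTree) : PTree.mk q.out = q := Quot.out_eq q

lemma PTree.mk_eq_mk_iff {s t : BTree ℕ} : PTree.mk t = PTree.mk s ↔ s ∈ flips t :=
  mk_eq_mk_iff_mem_flips

lemma PTree.out_mk_mem_flips (t : BTree ℕ) : (PTree.mk t).out ∈ flips t :=
  PTree.mk_eq_mk_iff.1 (PTree.mk_out _).symm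

section counting

open scoped Classical

variable {n : ℕ}

noncomputable def phyloFinset (n : ℕ) : Finset PTree := (orderedPhylo n).toFinset.image PTree.mk

lemma coe_phyloFinset (n : ℕ) : (phyloFinset n : Set PTree) = PhyloSet n := by
  ext q
  simp only [phyloFinset, Finset.coe_image, List.coe_toFinset, Set.mem_image, Set.mem_ofPred_eq,
    mem_orderedPhylo]
  refine ⟨?_, fun h => ⟨q.out, h, PTree.mk_out q⟩⟩
  rintro ⟨t, ht, rfl⟩
  exact (isPhylo_iff_of_mem_flips (PTree.out_mk_mem_flips t)).2 ht

lemma sum_map_orderedPhylo {f : BTree ℕ → ℕ} (hf : ∀ t, ∀ s ∈ flips t, f s = f t) :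
    ((orderedPhylo n).map f).sum = 2 ^ (n - 1) * ∑ q ∈ phyloFinset n, f q.out := by
  rw [← List.sum_toFinset f (nodup_orderedPhylo n), Finset.mul_sum, phyloFinset]
  refine (Finset.sum_image' f fun t ht => ?_).symm
  have ht := mem_orderedPhylo.1 (List.mem_toFinset.1 ht)
  have hfiber : {s ∈ (orderedPhylo n).toFinset | PTree.mk s = PTree.mk t} = (flips t).toFinset := by
    ext s
    simp only [Finset.mem_filter, List.mem_toFinset, mem_orderedPhylo, PTree.mk_eq_mk_iff]
    exact ⟨fun h => mem_flips_symm h.2,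
      fun hs => ⟨(isPhylo_iff_of_mem_flips hs).2 ht, mem_flips_symm hs⟩⟩
  rw [hfiber, Finset.sum_congr rfl fun s hs => hf t s (List.mem_toFinset.1 hs), Finset.sum_const,
    List.card_toFinset, (nodup_flips ht.nodup).dedup, length_flips,
    hf t _ (PTree.out_mk_mem_flips t), smul_eq_mul, ← ht.leaves_eq, ← internals_add_one,
    Nat.add_sub_cancel]

lemma length_orderedPhylo (n : ℕ) : (orderedPhylo n).length = 2 ^ (n - 1) * aP n := by
  simpa [aP, ← coe_phyloFinset, Set.ncard_coe_finset] using
    sum_map_orderedPhylo (f := fun _ => 1) (fun _ _ _ => rfl)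

lemma sum_sackin_orderedPhylo (n : ℕ) :
    ((orderedPhylo n).map sackin).sum = 2 ^ (n - 1) * SpTotal n := by
  rw [sum_map_orderedPhylo (fun _ _ => sackin_of_mem_flips), SpTotal, ← coe_phyloFinset,
    finsum_mem_coe_finset]

end counting

section recurrences

variable {n : ℕ}

lemma length_orderedPhylo_succ (hn : 1 ≤ n) :
    (orderedPhylo (n + 1)).length = (4 * n - 2) * (orderedPhylo n).length := by
  have hlength : ∀ t ∈ orderedPhylo n, (insertions (n + 1) t).length = 4 * n - 2 := by
    intro t ht
    have := length_insertions (n + 1) t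
    rw [(mem_orderedPhylo.1 ht).leaves_eq] at this
    omega
  rw [orderedPhylo_succ hn, List.length_flatMap, List.map_congr_left hlength]
  simp [mul_comm]

lemma sum_sackin_orderedPhylo_succ (hn : 1 ≤ n) :
    ((orderedPhylo (n + 1)).map sackin).sum =
      (4 * n + 4) * ((orderedPhylo n).map sackin).sum + (2 * n + 2) * (orderedPhylo n).length := by
  have hsum : ∀ t ∈ orderedPhylo n, ((insertions (n + 1) t).map sackin).sum =
      (4 * n + 4) * t.sackin + (2 * n + 2) := by
    intro t ht
    rw [sum_sackin_insertions, (mem_orderedPhylo.1 ht).leaves_eq, add_assoc]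
  rw [orderedPhylo_succ hn, List.map_flatMap, List.flatMap_def, List.sum_flatten, List.map_map,
    Function.comp_def, List.map_congr_left hsum, List.sum_map_add, List.sum_map_mul_left]
  simp [mul_comm]

lemma length_orderedPhylo_pos (hn : 1 ≤ n) : 0 < (orderedPhylo n).length := by
  induction n, hn using Nat.le_induction with
  | base => exact Nat.one_pos
  | succ n hn ih => rw [length_orderedPhylo_succ hn]; exact Nat.mul_pos (by omega) ih

end recurrences

def expectedSackin (n : ℕ) : ℚ :=
  (4 : ℚ) ^ (n - 1) * (Nat.factorial n : ℚ) * (Nat.factorial (n - 1) : ℚ) /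
    (Nat.factorial (2 * n - 2) : ℚ) - (n : ℚ)

lemma expectedSackin_succ {n : ℕ} (hn : 1 ≤ n) :
    (4 * n - 2) * expectedSackin (n + 1) = (4 * n + 4) * expectedSackin n + 2 * n + 2 := by
  obtain ⟨m, rfl⟩ := Nat.exists_eq_add_of_le' hn
  have h2m : 2 * (m + 1 + 1) - 2 = 2 * m + 1 + 1 := by omega
  simp only [expectedSackin, Nat.add_sub_cancel, h2m, Nat.factorial_succ,
    show 2 * (m + 1) - 2 = 2 * m by omega]
  have : (Nat.factorial (2 * m) : ℚ) ≠ 0 := by positivity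
  field_simp
  push_cast
  ring

lemma sum_sackin_orderedPhylo_eq {n : ℕ} (hn : 1 ≤ n) :
    (((orderedPhylo n).map sackin).sum : ℚ) = (orderedPhylo n).length * expectedSackin n := by
  induction n, hn using Nat.le_induction with
  | base => simp [orderedPhylo, sackin, expectedSackin]
  | succ n hn ih =>
    have hE := expectedSackin_succ hn
    rw [sum_sackin_orderedPhylo_succ hn, length_orderedPhylo_succ hn]
    push_cast [Nat.cast_sub (show 2 ≤ 4 * n by omega), ih]
    linear_combination -((orderedPhylo n).length : ℚ) * hE

/-- the expected Sackin index under the uniform model equals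
`4^(n-1) n! (n-1)! / (2n-2)! - n` for `n ≥ 2`. -/
theorem stmt_16 : ∀ n : ℕ, 2 ≤ n →
    (SpTotal n : ℚ) / (aP n : ℚ) =
      (4 : ℚ) ^ (n - 1) * (Nat.factorial n : ℚ) * (Nat.factorial (n - 1) : ℚ) /
        (Nat.factorial (2 * n - 2) : ℚ) - (n : ℚ) := by
  intro n hn
  have hn1 : 1 ≤ n := by omega
  have hcount := sum_sackin_orderedPhylo_eq hn1
  have hpos := length_orderedPhylo_pos hn1
  rw [sum_sackin_orderedPhylo, length_orderedPhylo] at hcount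
  rw [length_orderedPhylo] at hpos
  have haP : (aP n : ℚ) ≠ 0 := by exact_mod_cast (Nat.pos_of_mul_pos_left hpos).ne'
  have h2 : (2 : ℚ) ^ (n - 1) ≠ 0 := by positivity
  push_cast at hcount
  rw [div_eq_iff haP, ← expectedSackin]
  exact mul_left_cancel₀ h2 (hcount.trans (by ring))
end

section
/- Let (b_n) be a real sequence with b_n = Θ(n^{−3/2}ρ^{−n}) for some 0 < ρ < 1. Then F_n := Σ_{1 ≤ k ≤ n/2} k·b_k·b_{n−k} − [n even]·(n/2)·C(b_{n/2},2) satisfies F_n = O(n^{−1}·ρ^{−n}). -/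
lemma aux_sqrt_le_add_one (x : ℝ) (hx : 0 ≤ x) : Real.sqrt x ≤ x + 1 := by
  nlinarith [Real.sq_sqrt hx, Real.sqrt_nonneg x, sq_nonneg (Real.sqrt x - 1)]

lemma aux_rpow_three_halves (x : ℝ) (hx : 0 ≤ x) :
    x ^ ((3:ℝ)/2) = x * Real.sqrt x := by
  rw [Real.sqrt_eq_rpow, show (3:ℝ)/2 = 1 + 1/2 by norm_num,
    Real.rpow_add' hx (by norm_num), Real.rpow_one]

lemma aux_geom_bound (q : ℝ) (hq0 : 0 < q) (hq1 : q < 1) (m : ℕ) :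
    (m : ℝ) * q ^ m ≤ q / (1 - q) := by
  rcases Nat.eq_zero_or_pos m with h | h
  · simp [h]; exact div_nonneg hq0.le (by linarith)
  have hm : (1:ℝ) ≤ m := by exact_mod_cast h
  set t : ℝ := 1/q - 1 with htdef
  have ht0 : 0 < t := by
    have h1 : 1 < 1/q := by rw [lt_div_iff₀ hq0]; linarith
    simp only [htdef]; linarith
  have hpow : (m:ℝ) * t ≤ (1/q) ^ m := by
    have := one_add_mul_le_pow (by linarith : (-2:ℝ) ≤ t) m
    have e : (1 + t) = 1/q := by simp [htdef]
    rw [e] at this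
    nlinarith
  have hqm : (0:ℝ) < q ^ m := by positivity
  have h1 : (1/q)^m = (q^m)⁻¹ := by rw [one_div, inv_pow]
  rw [h1] at hpow
  have hmt : 0 < (m:ℝ) * t := by positivity
  have mne : (m:ℝ) ≠ 0 := by positivity
  have h2 : q^m ≤ ((m:ℝ)*t)⁻¹ := by
    rw [← inv_inv (q^m)]
    exact inv_anti₀ hmt hpow
  have h3 : t⁻¹ = q / (1-q) := by rw [htdef]; field_simp
  calc (m:ℝ) * q^m ≤ (m:ℝ) * ((m:ℝ)*t)⁻¹ :=
        mul_le_mul_of_nonneg_left h2 (by positivity)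
    _ = t⁻¹ := by rw [mul_inv, ← mul_assoc, mul_inv_cancel₀ mne, one_mul]
    _ = q / (1-q) := h3

lemma aux_sum_inv_sqrt (m : ℕ) :
    ∑ k ∈ Finset.Icc 1 m, (Real.sqrt k)⁻¹ ≤ 2 * Real.sqrt m := by
  induction m with
  | zero => simp
  | succ m ih =>
    rw [Finset.sum_Icc_succ_top (by omega : 1 ≤ m + 1)]
    have hs : Real.sqrt m ^ 2 = m := Real.sq_sqrt (by positivity)
    have hc : ((m+1 : ℕ) : ℝ) = (m:ℝ) + 1 := by push_cast; ring
    have ht : Real.sqrt ((m+1:ℕ):ℝ) ^ 2 = (m:ℝ) + 1 := by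
      rw [hc]; exact Real.sq_sqrt (by positivity)
    have htpos : 0 < Real.sqrt ((m+1:ℕ):ℝ) := by
      rw [hc]; exact Real.sqrt_pos.mpr (by positivity)
    have key : (Real.sqrt ((m+1:ℕ):ℝ))⁻¹ ≤ 2 * Real.sqrt ((m+1:ℕ):ℝ) - 2 * Real.sqrt m := by
      rw [inv_eq_one_div, div_le_iff₀ htpos]
      nlinarith [sq_nonneg (Real.sqrt ((m+1:ℕ):ℝ) - Real.sqrt m), Real.sqrt_nonneg (m:ℝ),
        Real.sqrt_nonneg ((m+1:ℕ):ℝ)]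
    have := add_le_add ih key
    linarith

set_option maxHeartbeats 1000000 in
/-- if `b_n = Θ(n^{-3/2} ρ^{-n})` with `0 < ρ < 1`, then
`F_n = Σ_{1 ≤ k ≤ n/2} k b_k b_{n-k} - [n even] (n/2) C(b_{n/2}, 2)` is `O(n^{-1} ρ^{-n})`. -/
theorem stmt_17 (ρ : ℝ) (hρ0 : 0 < ρ) (hρ1 : ρ < 1) (b : ℕ → ℝ)
    (hpos : ∀ n : ℕ, 1 ≤ n → 0 < b n)
    (hΘ : ∃ c C : ℝ, 0 < c ∧ 0 < C ∧ ∀ n : ℕ, 1 ≤ n →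
      c * (((n : ℝ) ^ ((3 : ℝ) / 2))⁻¹ * (ρ ^ n)⁻¹) ≤ b n ∧
      b n ≤ C * (((n : ℝ) ^ ((3 : ℝ) / 2))⁻¹ * (ρ ^ n)⁻¹)) :
    ∃ K : ℝ, 0 < K ∧ ∀ n : ℕ, 1 ≤ n →
      |(∑ k ∈ (Finset.range (n + 1)).filter (fun k => 1 ≤ k ∧ 2 * k ≤ n),
          (k : ℝ) * b k * b (n - k)) -
        (if Even n then ((n : ℝ) / 2) * (b (n / 2) * (b (n / 2) - 1) / 2) else 0)|
      ≤ K * (((n : ℝ))⁻¹ * (ρ ^ n)⁻¹) := by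
  obtain ⟨c, C, hc, hC, hb⟩ := hΘ
  have hρ2 : 0 < 1 - ρ^2 := by nlinarith
  refine ⟨8*C^2 + C^2 + C/(1-ρ^2), by positivity, ?_⟩
  intro n hn
  have hn0 : (0:ℝ) < n := by exact_mod_cast hn
  have hub : ∀ j : ℕ, 1 ≤ j → b j ≤ C * ((j:ℝ)⁻¹ * (Real.sqrt j)⁻¹ * (ρ^j)⁻¹) := by
    intro j hj
    have hj0 : (0:ℝ) ≤ j := by positivity
    have h := (hb j hj).2
    rw [aux_rpow_three_halves _ hj0, mul_inv] at h
    calc b j ≤ C * (((j:ℝ)⁻¹ * (Real.sqrt j)⁻¹) * (ρ^j)⁻¹) := h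
      _ = C * ((j:ℝ)⁻¹ * (Real.sqrt j)⁻¹ * (ρ^j)⁻¹) := by ring
  set s := (Finset.range (n+1)).filter (fun k => 1 ≤ k ∧ 2*k ≤ n) with hsdef
  have hsnpos : (0:ℝ) < Real.sqrt n := Real.sqrt_pos.mpr hn0
  -- bound on the sum
  have hterm : ∀ k ∈ s, (k:ℝ) * b k * b (n-k) ≤
      (4*C^2 * ((n:ℝ)⁻¹ * (Real.sqrt n)⁻¹ * (ρ^n)⁻¹)) * (Real.sqrt k)⁻¹ := by
    intro k hk
    simp only [hsdef, Finset.mem_filter, Finset.mem_range] at hk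
    obtain ⟨hkn, hk1, hk2⟩ := hk
    have hnk1 : 1 ≤ n - k := by omega
    have hkpos : (0:ℝ) < k := by exact_mod_cast hk1
    have hnkpos : (0:ℝ) < ((n-k:ℕ):ℝ) := by exact_mod_cast hnk1
    have hskpos : (0:ℝ) < Real.sqrt k := Real.sqrt_pos.mpr hkpos
    have hsnkpos : (0:ℝ) < Real.sqrt ((n-k:ℕ):ℝ) := Real.sqrt_pos.mpr hnkpos
    have hbk := hub k hk1
    have hbnk := hub (n-k) hnk1
    have hbknn : 0 ≤ b k := (hpos k hk1).le
    have hbnknn : 0 ≤ b (n-k) := (hpos _ hnk1).le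
    have step1 : (k:ℝ) * b k * b (n-k) ≤
        (k:ℝ) * (C * ((k:ℝ)⁻¹ * (Real.sqrt k)⁻¹ * (ρ^k)⁻¹)) *
          (C * ((((n-k:ℕ)):ℝ)⁻¹ * (Real.sqrt ((n-k:ℕ):ℝ))⁻¹ * (ρ^(n-k))⁻¹)) := by
      apply mul_le_mul (mul_le_mul_of_nonneg_left hbk hkpos.le) hbnk hbnknn (by positivity)
    have hr : ρ^k * ρ^(n-k) = ρ^n := by rw [← pow_add]; congr 1; omega
    have hcast2 : (n:ℝ) ≤ 2 * ((n-k:ℕ):ℝ) := by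
      have h2 : n ≤ 2*(n-k) := by omega
      exact_mod_cast h2
    have hinv1 : (((n-k:ℕ)):ℝ)⁻¹ ≤ 2 * (n:ℝ)⁻¹ := by
      rw [show (2:ℝ) * (n:ℝ)⁻¹ = ((n:ℝ)/2)⁻¹ by field_simp]
      exact inv_anti₀ (by positivity) (by linarith)
    have hsq4 : Real.sqrt (n:ℝ) ≤ 2 * Real.sqrt ((n-k:ℕ):ℝ) := by
      have h4 : (n:ℝ) ≤ 4 * ((n-k:ℕ):ℝ) := by linarith
      calc Real.sqrt (n:ℝ) ≤ Real.sqrt (4 * ((n-k:ℕ):ℝ)) := Real.sqrt_le_sqrt h4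
        _ = 2 * Real.sqrt ((n-k:ℕ):ℝ) := by
            rw [Real.sqrt_mul (by norm_num) _, show Real.sqrt 4 = 2 by
              rw [show (4:ℝ) = 2^2 by norm_num, Real.sqrt_sq (by norm_num)]]
    have hinv2 : (Real.sqrt ((n-k:ℕ):ℝ))⁻¹ ≤ 2 * (Real.sqrt (n:ℝ))⁻¹ := by
      rw [show (2:ℝ) * (Real.sqrt (n:ℝ))⁻¹ = (Real.sqrt (n:ℝ)/2)⁻¹ by field_simp]
      exact inv_anti₀ (by positivity) (by linarith)
    calc (k:ℝ) * b k * b (n-k) ≤ _ := step1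
      _ = C^2 * (Real.sqrt k)⁻¹ * ((((n-k:ℕ)):ℝ)⁻¹ * (Real.sqrt ((n-k:ℕ):ℝ))⁻¹) *
            ((ρ^k)⁻¹ * (ρ^(n-k))⁻¹) * ((k:ℝ) * (k:ℝ)⁻¹) := by ring
      _ = C^2 * (Real.sqrt k)⁻¹ * ((((n-k:ℕ)):ℝ)⁻¹ * (Real.sqrt ((n-k:ℕ):ℝ))⁻¹) *
            (ρ^n)⁻¹ := by
          rw [show (ρ^k : ℝ)⁻¹ * (ρ^(n-k))⁻¹ = (ρ^n)⁻¹ by rw [← mul_inv, hr],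
            mul_inv_cancel₀ (ne_of_gt hkpos), mul_one]
      _ ≤ C^2 * (Real.sqrt k)⁻¹ * ((2 * (n:ℝ)⁻¹) * (2 * (Real.sqrt (n:ℝ))⁻¹)) *
            (ρ^n)⁻¹ := by
          gcongr
      _ = (4*C^2 * ((n:ℝ)⁻¹ * (Real.sqrt n)⁻¹ * (ρ^n)⁻¹)) * (Real.sqrt k)⁻¹ := by ring
  have hsub : s ⊆ Finset.Icc 1 n := by
    intro k hk
    simp only [hsdef, Finset.mem_filter, Finset.mem_range] at hk
    simp only [Finset.mem_Icc]
    omega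
  have hA : (∑ k ∈ s, (k:ℝ) * b k * b (n-k)) ≤ 8*C^2 * ((n:ℝ)⁻¹ * (ρ^n)⁻¹) := by
    calc (∑ k ∈ s, (k:ℝ) * b k * b (n-k))
        ≤ ∑ k ∈ s, (4*C^2 * ((n:ℝ)⁻¹ * (Real.sqrt n)⁻¹ * (ρ^n)⁻¹)) * (Real.sqrt k)⁻¹ :=
          Finset.sum_le_sum hterm
      _ = (4*C^2 * ((n:ℝ)⁻¹ * (Real.sqrt n)⁻¹ * (ρ^n)⁻¹)) * ∑ k ∈ s, (Real.sqrt k)⁻¹ :=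
          (Finset.mul_sum _ _ _).symm
      _ ≤ (4*C^2 * ((n:ℝ)⁻¹ * (Real.sqrt n)⁻¹ * (ρ^n)⁻¹)) * (2 * Real.sqrt n) := by
          apply mul_le_mul_of_nonneg_left _ (by positivity)
          calc (∑ k ∈ s, (Real.sqrt (k:ℝ))⁻¹) ≤ ∑ k ∈ Finset.Icc 1 n, (Real.sqrt (k:ℝ))⁻¹ :=
                Finset.sum_le_sum_of_subset_of_nonneg hsub (fun i _ _ => by positivity)
            _ ≤ 2 * Real.sqrt n := aux_sum_inv_sqrt n
      _ = 8*C^2 * ((n:ℝ)⁻¹ * (ρ^n)⁻¹) * ((Real.sqrt n)⁻¹ * Real.sqrt n) := by ring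
      _ = 8*C^2 * ((n:ℝ)⁻¹ * (ρ^n)⁻¹) := by
          rw [inv_mul_cancel₀ (ne_of_gt hsnpos), mul_one]
  have hAnn : 0 ≤ (∑ k ∈ s, (k:ℝ) * b k * b (n-k)) := by
    apply Finset.sum_nonneg; intro k hk
    simp only [hsdef, Finset.mem_filter, Finset.mem_range] at hk
    have h1 := hpos k hk.2.1
    have h2 := hpos (n-k) (by omega)
    positivity
  have hB : |(if Even n then ((n:ℝ)/2) * (b (n/2) * (b (n/2) - 1) / 2) else 0)|
      ≤ (C^2 + C/(1-ρ^2)) * ((n:ℝ)⁻¹ * (ρ^n)⁻¹) := by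
    by_cases heven : Even n
    · rw [if_pos heven]
      rw [Nat.even_iff] at heven
      obtain ⟨m, hm2⟩ : ∃ m, 2 * m = n := ⟨n / 2, by omega⟩
      rw [show n / 2 = m by omega]
      have hm1 : 1 ≤ m := by omega
      have hmpos : (0:ℝ) < m := by exact_mod_cast hm1
      have hcast : (n:ℝ) = 2 * (m:ℝ) := by exact_mod_cast hm2.symm
      have hbm := hub m hm1
      have hbmpos := hpos m hm1
      have hsmpos : (0:ℝ) < Real.sqrt m := Real.sqrt_pos.mpr hmpos
      have hsm2 : Real.sqrt (m:ℝ) ^ 2 = (m:ℝ) := Real.sq_sqrt hmpos.le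
      have hminv : (m:ℝ)⁻¹ ≤ 2 * (n:ℝ)⁻¹ := by
        rw [hcast]; rw [mul_inv]; rw [← mul_assoc]
        norm_num
      have hminv1 : (m:ℝ)⁻¹ ≤ 1 := by
        rw [← inv_one]
        exact inv_anti₀ (by norm_num) (by exact_mod_cast hm1)
      have hrn : ρ^m * ρ^m = ρ^n := by rw [← pow_add]; congr 1; omega
      -- |value| ≤ m * (b m ^ 2 + b m) / 2
      have habs : |((n:ℝ)/2) * (b m * (b m - 1) / 2)| ≤ (m:ℝ) * (b m^2 + b m) / 2 := by
        rw [abs_mul]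
        have h1 : |(n:ℝ)/2| = (m:ℝ) := by
          rw [abs_of_nonneg (by positivity), hcast]; ring
        have h2 : |b m * (b m - 1) / 2| ≤ (b m^2 + b m)/2 := by
          rw [abs_div, abs_of_nonneg (by norm_num : (0:ℝ) ≤ 2)]
          apply div_le_div_of_nonneg_right _ (by norm_num)
          rw [abs_le]
          constructor <;> nlinarith [sq_nonneg (b m), hbmpos]
        calc |(n:ℝ)/2| * |b m * (b m - 1) / 2| ≤ (m:ℝ) * ((b m^2 + b m)/2) := by
              rw [h1]; exact mul_le_mul_of_nonneg_left h2 hmpos.le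
          _ = (m:ℝ) * (b m^2 + b m) / 2 := by ring
      -- part 1 : m * b m ^2 / 2
      have hbm2 : b m ^ 2 ≤ C^2 * ((m:ℝ)⁻¹^2 * (m:ℝ)⁻¹ * (ρ^n)⁻¹) := by
        have h2 : b m ^ 2 ≤ (C * ((m:ℝ)⁻¹ * (Real.sqrt m)⁻¹ * (ρ^m)⁻¹))^2 :=
          pow_le_pow_left₀ hbmpos.le hbm 2
        calc b m ^ 2 ≤ _ := h2
          _ = C^2 * ((m:ℝ)⁻¹^2 * ((Real.sqrt (m:ℝ))⁻¹)^2 * ((ρ^m)⁻¹ * (ρ^m)⁻¹)) := by ring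
          _ = C^2 * ((m:ℝ)⁻¹^2 * (m:ℝ)⁻¹ * (ρ^n)⁻¹) := by
              rw [show ((Real.sqrt (m:ℝ))⁻¹)^2 = (m:ℝ)⁻¹ by rw [inv_pow, hsm2],
                show (ρ^m : ℝ)⁻¹ * (ρ^m : ℝ)⁻¹ = (ρ^n)⁻¹ by rw [← mul_inv, hrn]]
      have part1 : (m:ℝ) * b m^2 / 2 ≤ C^2 * ((n:ℝ)⁻¹ * (ρ^n)⁻¹) := by
        calc (m:ℝ) * b m^2 / 2 ≤ (m:ℝ) * (C^2 * ((m:ℝ)⁻¹^2 * (m:ℝ)⁻¹ * (ρ^n)⁻¹)) / 2 := by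
              apply div_le_div_of_nonneg_right _ (by norm_num)
              exact mul_le_mul_of_nonneg_left hbm2 hmpos.le
          _ = C^2/2 * (m:ℝ)⁻¹ * (m:ℝ)⁻¹ * (ρ^n)⁻¹ * ((m:ℝ) * (m:ℝ)⁻¹) := by ring
          _ = C^2/2 * (m:ℝ)⁻¹ * (m:ℝ)⁻¹ * (ρ^n)⁻¹ := by
              rw [mul_inv_cancel₀ (ne_of_gt hmpos), mul_one]
          _ ≤ C^2/2 * 1 * (2 * (n:ℝ)⁻¹) * (ρ^n)⁻¹ := by gcongr
          _ = C^2 * ((n:ℝ)⁻¹ * (ρ^n)⁻¹) := by ring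
      -- part 2 : m * b m / 2
      have hsmρ : Real.sqrt (m:ℝ) * ρ^m ≤ 1/(1-ρ^2) := by
        have hg := aux_geom_bound (ρ^2) (by positivity) (by nlinarith) m
        have he : Real.sqrt ((m:ℝ) * (ρ^2)^m) = Real.sqrt (m:ℝ) * ρ^m := by
          rw [Real.sqrt_mul (by positivity), show ((ρ^2)^m : ℝ) = (ρ^m)^2 by ring,
            Real.sqrt_sq (by positivity)]
        have h3 := aux_sqrt_le_add_one ((m:ℝ)*(ρ^2)^m) (by positivity)
        rw [he] at h3
        have hfin : ρ^2/(1-ρ^2) + 1 = 1/(1-ρ^2) := by field_simp; ring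
        linarith
      have part2 : (m:ℝ) * b m / 2 ≤ C/(1-ρ^2) * ((n:ℝ)⁻¹ * (ρ^n)⁻¹) := by
        have e1 : (Real.sqrt (m:ℝ))⁻¹ = Real.sqrt (m:ℝ) * (m:ℝ)⁻¹ := by
          have hms : Real.sqrt (m:ℝ) * Real.sqrt (m:ℝ) = (m:ℝ) :=
            Real.mul_self_sqrt hmpos.le
          field_simp
          exact hsm2.symm
        have e2 : (ρ^m : ℝ)⁻¹ = ρ^m * (ρ^n)⁻¹ := by
          rw [← hrn, mul_inv, ← mul_assoc,
            mul_inv_cancel₀ (by positivity : (ρ:ℝ)^m ≠ 0), one_mul]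
        calc (m:ℝ) * b m / 2 ≤ (m:ℝ) * (C * ((m:ℝ)⁻¹ * (Real.sqrt m)⁻¹ * (ρ^m)⁻¹)) / 2 := by
              apply div_le_div_of_nonneg_right _ (by norm_num)
              exact mul_le_mul_of_nonneg_left hbm hmpos.le
          _ = C/2 * (Real.sqrt (m:ℝ))⁻¹ * (ρ^m)⁻¹ * ((m:ℝ) * (m:ℝ)⁻¹) := by ring
          _ = C/2 * (Real.sqrt (m:ℝ))⁻¹ * (ρ^m)⁻¹ := by
              rw [mul_inv_cancel₀ (ne_of_gt hmpos), mul_one]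
          _ = C/2 * (Real.sqrt (m:ℝ) * ρ^m) * (m:ℝ)⁻¹ * (ρ^n)⁻¹ := by
              rw [e1, e2]; ring
          _ ≤ C/2 * (1/(1-ρ^2)) * (2 * (n:ℝ)⁻¹) * (ρ^n)⁻¹ := by gcongr
          _ = C/(1-ρ^2) * ((n:ℝ)⁻¹ * (ρ^n)⁻¹) := by ring
      calc |((n:ℝ)/2) * (b m * (b m - 1) / 2)| ≤ (m:ℝ) * (b m^2 + b m) / 2 := habs
        _ = (m:ℝ) * b m^2 / 2 + (m:ℝ) * b m / 2 := by ring
        _ ≤ C^2 * ((n:ℝ)⁻¹ * (ρ^n)⁻¹) + C/(1-ρ^2) * ((n:ℝ)⁻¹ * (ρ^n)⁻¹) :=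
            add_le_add part1 part2
        _ = (C^2 + C/(1-ρ^2)) * ((n:ℝ)⁻¹ * (ρ^n)⁻¹) := by ring
    · rw [if_neg heven, abs_zero]
      positivity
  calc |(∑ k ∈ s, (k:ℝ) * b k * b (n-k)) -
        (if Even n then ((n:ℝ)/2) * (b (n/2) * (b (n/2) - 1) / 2) else 0)|
      ≤ |(∑ k ∈ s, (k:ℝ) * b k * b (n-k))| +
        |(if Even n then ((n:ℝ)/2) * (b (n/2) * (b (n/2) - 1) / 2) else 0)| := abs_sub _ _
    _ ≤ 8*C^2 * ((n:ℝ)⁻¹ * (ρ^n)⁻¹) + (C^2 + C/(1-ρ^2)) * ((n:ℝ)⁻¹ * (ρ^n)⁻¹) := by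
        apply add_le_add _ hB
        rw [abs_of_nonneg hAnn]; exact hA
    _ = (8*C^2 + C^2 + C/(1-ρ^2)) * ((n:ℝ)⁻¹ * (ρ^n)⁻¹) := by ring
end

section
/- For every full binary rooted tree T with n leaves, S(T) ≥ C(T), where S is the Sackin index and C the Colless index; moreover S(T) − C(T) is even. -/
/-- `S(T) ≥ C(T)` and `S(T) - C(T)` is even. -/
theorem stmt_18 : ∀ T : BTree Unit,
    BTree.colless T ≤ BTree.sackin T ∧ 2 ∣ (BTree.sackin T - BTree.colless T) := by
  intro T
  induction T with
  | leaf a => simp [BTree.sackin, BTree.colless]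
  | node l r ihl ihr =>
    obtain ⟨h1, k1, hk1⟩ := ihl
    obtain ⟨h2, k2, hk2⟩ := ihr
    simp only [BTree.sackin, BTree.colless]
    have : ((BTree.leaves l : ℤ) - (BTree.leaves r : ℤ)).natAbs ≤ BTree.leaves l + BTree.leaves r ∧ 2 ∣ (BTree.leaves l + BTree.leaves r - ((BTree.leaves l : ℤ) - (BTree.leaves r : ℤ)).natAbs) := by
      constructor <;> omega
    omega
end
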